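/- arXiv:1602.02733 — 4 statements merged into one kernel-verified Lean document; each statement's English description precedes it below -/
import Mathlib

section
/- Let n ∈ (0, 3/2) and suppose H ∈ C³((0,δ)) satisfies H(x)^{n−1} H'''(x) = −1 + x and H > 0 on (0,δ), together with the leading-order asymptotic H(x) = κ x² (1 + o(1)) as x ↘ 0 for some κ > 0. Then also H'(x) = 2κ x (1 + o(1)) and H''(x) = 2κ (1 + o(1)) as x ↘ 0. Consequently, setting F(s) := e^{−2s} H(e^s), the quintuple (e^{(4−2n)s}, e^{(3−2n)s}, F(s), (dF/ds)(s), (d²F/ds²)(s)) converges to p_κ := (0, 0, κ, 0, 0) as s → −∞. -/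
/-!
Solving the equation for `H'''` gives
`H''' = (x - 1) (H / x²)^(1-n) x^(2-2n) = O(x^(2-2n))`, which is integrable at `0` because
`n < 3/2`; hence `H''` has a limit at `0⁺`, so it is bounded and `H'` has a limit too.
L'Hôpital's rule then compares these limits with `H ~ κ x²`: `H / x → lim H'` forces
`lim H' = 0`, and then `H' / x → lim H''` and `H / x² → (lim H'') / 2` force
`lim H'' = 2κ`. In the variable `s = log x`, with `B(s) = e^(-s) H'(e^s)`, the rescaled profile
satisfies `F' = B - 2F` and `F'' = H''(e^s) - 3B + 4F`, which tend to `2κ - 2κ` and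
`2κ - 6κ + 4κ`.
-/

open Set Filter Real MeasureTheory Topology Asymptotics

section LimitAtLeftEndpoint

variable {E : Type*} [NormedAddCommGroup E] [NormedSpace ℝ E] [CompleteSpace E]

theorem exists_tendsto_nhdsGT_of_integrableAtFilter_deriv {f : ℝ → E} {a : ℝ}
    (hdiff : ∀ᶠ x in 𝓝[>] a, DifferentiableAt ℝ f x)
    (hint : IntegrableAtFilter (deriv f) (𝓝[>] a)) :
    ∃ L, Tendsto f (𝓝[>] a) (𝓝 L) := by
  obtain ⟨s, hs, hf's⟩ := hint
  obtain ⟨b, hab : a < b, hsub⟩ := mem_nhdsGT_iff_exists_Ioo_subset.1 (inter_mem hs hdiff)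
  obtain ⟨c, hac, hcb⟩ := exists_between hab
  have hint : IntervalIntegrable (deriv f) volume a c :=
    (intervalIntegrable_iff_integrableOn_Ioo_of_le hac.le).2
      (hf's.mono_set fun x hx => (hsub ⟨hx.1, hx.2.trans hcb⟩).1)
  have hftc : ∀ x ∈ Ioo a c, f c + ∫ t in c..x, deriv f t = f x := fun x hx => by
    have hcx : uIcc c x ⊆ Ioo a b := by
      rw [uIcc_of_ge hx.2.le]
      exact Icc_subset_Ioo hx.1 hcb
    rw [intervalIntegral.integral_eq_sub_of_hasDerivAt
      (fun t ht => (hsub (hcx ht)).2.hasDerivAt)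
      (hint.mono_set (uIcc_subset_uIcc right_mem_uIcc (mem_uIcc_of_le hx.1.le hx.2.le)))]
    abel
  have hprim : Tendsto (fun x => ∫ t in c..x, deriv f t) (𝓝[>] a)
      (𝓝 (∫ t in c..a, deriv f t)) :=
    (intervalIntegral.continuousOn_primitive_interval' hint right_mem_uIcc a
      left_mem_uIcc).mono_of_mem_nhdsWithin (by rw [uIcc_of_le hac.le]; exact Icc_mem_nhdsGT hac)
  exact ⟨_, (tendsto_const_nhds.add hprim).congr' <| by
    filter_upwards [Ioo_mem_nhdsGT hac] using hftc⟩

theorem integrableAtFilter_rpow_nhdsGT_zero {r : ℝ} (hr : -1 < r) :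
    IntegrableAtFilter (fun x : ℝ => x ^ r) (𝓝[>] 0) :=
  ⟨Ioo 0 1, Ioo_mem_nhdsGT one_pos, (intervalIntegral.integrableOn_Ioo_rpow_iff one_pos).2 hr⟩

theorem exists_tendsto_nhdsGT_zero_of_deriv_isBigO_rpow {f : ℝ → E} {r : ℝ} (hr : -1 < r)
    (hdiff : ∀ᶠ x in 𝓝[>] 0, DifferentiableAt ℝ f x)
    (hbig : deriv f =O[𝓝[>] 0] fun x => x ^ r) :
    ∃ L, Tendsto f (𝓝[>] 0) (𝓝 L) :=
  exists_tendsto_nhdsGT_of_integrableAtFilter_deriv hdiff <|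
    hbig.integrableAtFilter (stronglyMeasurable_deriv f).stronglyMeasurableAtFilter
      (integrableAtFilter_rpow_nhdsGT_zero hr)

end LimitAtLeftEndpoint

theorem tendsto_div_pow_succ_of_tendsto_deriv_div_pow {f : ℝ → ℝ} {L : ℝ} (k : ℕ)
    (hdiff : ∀ᶠ x in 𝓝[>] 0, DifferentiableAt ℝ f x) (hf : Tendsto f (𝓝[>] 0) (𝓝 0))
    (hf' : Tendsto (fun x => deriv f x / x ^ k) (𝓝[>] 0) (𝓝 L)) :
    Tendsto (fun x => f x / x ^ (k + 1)) (𝓝[>] 0) (𝓝 (L / (k + 1))) := by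
  refine HasDerivAt.lhopital_zero_nhdsGT (f' := deriv f) (g' := fun x => (k + 1) * x ^ k)
    (hdiff.mono fun x hx => hx.hasDerivAt) (.of_forall fun x => ?_) ?_ hf ?_ ?_
  · simpa using hasDerivAt_pow (k + 1) x
  · filter_upwards [self_mem_nhdsWithin] with x (hx : 0 < x)
    positivity
  · exact ((continuous_pow (k + 1)).tendsto' 0 0 (by simp)).mono_left nhdsWithin_le_nhds
  · exact (hf'.div_const _).congr fun x => by rw [div_div, mul_comm]

theorem tendsto_deriv_div_and_deriv_deriv_of_tendsto_div_sq {f : ℝ → ℝ} {κ L₁ L₂ : ℝ}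
    (hdiff : ∀ᶠ x in 𝓝[>] 0, DifferentiableAt ℝ f x ∧ DifferentiableAt ℝ (deriv f) x)
    (hf : Tendsto (fun x => f x / x ^ 2) (𝓝[>] 0) (𝓝 κ))
    (hf' : Tendsto (deriv f) (𝓝[>] 0) (𝓝 L₁))
    (hf'' : Tendsto (deriv (deriv f)) (𝓝[>] 0) (𝓝 L₂)) :
    Tendsto (fun x => deriv f x / x) (𝓝[>] 0) (𝓝 (2 * κ)) ∧
      Tendsto (deriv (deriv f)) (𝓝[>] 0) (𝓝 (2 * κ)) := by
  have hid : Tendsto (fun x : ℝ => x) (𝓝[>] 0) (𝓝 0) :=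
    tendsto_nhdsWithin_of_tendsto_nhds tendsto_id
  have hdiv : Tendsto (fun x => f x / x) (𝓝[>] 0) (𝓝 0) := by
    simpa using (hf.mul hid).congr' (by
      filter_upwards [self_mem_nhdsWithin] with x (hx : 0 < x)
      field_simp)
  have hf0 : Tendsto f (𝓝[>] 0) (𝓝 0) := by
    simpa using (hdiv.mul hid).congr' (by
      filter_upwards [self_mem_nhdsWithin] with x (hx : 0 < x)
      field_simp)
  have hdiv' : Tendsto (fun x => f x / x) (𝓝[>] 0) (𝓝 L₁) := by
    simpa using tendsto_div_pow_succ_of_tendsto_deriv_div_pow 0 (hdiff.mono fun _ h => h.1) hf0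
      (by simpa using hf')
  obtain rfl : L₁ = 0 := tendsto_nhds_unique hdiv' hdiv
  have h₁ : Tendsto (fun x => deriv f x / x) (𝓝[>] 0) (𝓝 L₂) := by
    simpa using tendsto_div_pow_succ_of_tendsto_deriv_div_pow 0 (hdiff.mono fun _ h => h.2) hf'
      (by simpa using hf'')
  have hf₂ : Tendsto (fun x => f x / x ^ 2) (𝓝[>] 0) (𝓝 (L₂ / 2)) := by
    simpa [one_add_one_eq_two] using
      tendsto_div_pow_succ_of_tendsto_deriv_div_pow 1 (hdiff.mono fun _ h => h.1) hf0
        (by simpa using h₁)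
  rw [tendsto_nhds_unique hf hf₂, mul_div_cancel₀ _ two_ne_zero]
  exact ⟨h₁, hf''⟩

theorem hasDerivAt_exp_mul_comp_exp {f : ℝ → ℝ} {f' : ℝ} (k : ℝ) {s : ℝ}
    (hf : HasDerivAt f f' (exp s)) :
    HasDerivAt (fun t => exp (k * t) * f (exp t))
      (exp ((k + 1) * s) * f' + k * (exp (k * s) * f (exp s))) s := by
  refine (((hasDerivAt_id s).const_mul k).exp.mul (hf.comp s (hasDerivAt_exp s))).congr_deriv ?_
  rw [add_mul, one_mul, exp_add, id, Function.comp_apply]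
  ring

theorem tendsto_exp_neg_mul_comp_exp_atBot {f : ℝ → ℝ} {L : ℝ} (k : ℕ)
    (hf : Tendsto (fun x => f x / x ^ k) (𝓝[>] 0) (𝓝 L)) :
    Tendsto (fun s => exp (-k * s) * f (exp s)) atBot (𝓝 L) :=
  (hf.comp tendsto_exp_atBot_nhdsGT).congr fun s => by
    rw [Function.comp_apply, neg_mul, exp_neg, ← exp_nat_mul, div_eq_inv_mul]

theorem tendsto_rescaled_trajectory_atBot {H : ℝ → ℝ} {κ : ℝ}
    (hdiff : ∀ᶠ x in 𝓝[>] 0, DifferentiableAt ℝ H x ∧ DifferentiableAt ℝ (deriv H) x)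
    (h₀ : Tendsto (fun x => H x / x ^ 2) (𝓝[>] 0) (𝓝 κ))
    (h₁ : Tendsto (fun x => deriv H x / x) (𝓝[>] 0) (𝓝 (2 * κ)))
    (h₂ : Tendsto (deriv (deriv H)) (𝓝[>] 0) (𝓝 (2 * κ))) :
    Tendsto (fun s => (exp (-2 * s) * H (exp s),
        deriv (fun t => exp (-2 * t) * H (exp t)) s,
        deriv (deriv (fun t => exp (-2 * t) * H (exp t))) s)) atBot (𝓝 (κ, 0, 0)) := by
  have hF := tendsto_exp_neg_mul_comp_exp_atBot 2 h₀
  have hB := tendsto_exp_neg_mul_comp_exp_atBot 1 (by simpa using h₁)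
  simp only [Nat.cast_ofNat] at hF
  simp only [Nat.cast_one, neg_mul, one_mul] at hB
  set F := fun t => exp (-2 * t) * H (exp t)
  set B := fun t => exp (-t) * deriv H (exp t)
  have hC : Tendsto (fun s => deriv (deriv H) (exp s)) atBot (𝓝 (2 * κ)) :=
    h₂.comp tendsto_exp_atBot_nhdsGT
  obtain ⟨b, hb : 0 < b, hsub⟩ := mem_nhdsGT_iff_exists_Ioo_subset.1 hdiff
  have hexp : ∀ᶠ s in atBot, ∀ᶠ t in 𝓝 s, exp t ∈ Ioo 0 b := by
    filter_upwards [eventually_lt_atBot (log b)] with s hs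
    filter_upwards [Iio_mem_nhds hs] with t ht
    exact ⟨exp_pos t, (lt_log_iff_exp_lt hb).1 ht⟩
  have hF' : ∀ t, exp t ∈ Ioo 0 b → HasDerivAt F (B t - 2 * F t) t := fun t ht =>
    (hasDerivAt_exp_mul_comp_exp (-2) (hsub ht).1.hasDerivAt).congr_deriv (by
      simp only [F, B]; norm_num; ring)
  have hB' : ∀ t, exp t ∈ Ioo 0 b → HasDerivAt B (deriv (deriv H) (exp t) - B t) t := by
    intro t ht
    have h := hasDerivAt_exp_mul_comp_exp (-1) (hsub ht).2.hasDerivAt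
    simp only [neg_one_mul, neg_add_cancel, zero_mul, exp_zero, one_mul] at h
    exact h.congr_deriv (by ring)
  have hF'' : ∀ᶠ s in atBot,
      deriv (deriv F) s = deriv (deriv H) (exp s) - 3 * B s + 4 * F s := by
    filter_upwards [hexp] with s hs
    have hderiv : deriv F =ᶠ[𝓝 s] fun t => B t - 2 * F t := by
      filter_upwards [hs] with t ht using (hF' t ht).deriv
    have hderiv' : HasDerivAt (fun t => B t - 2 * F t)
        (deriv (deriv H) (exp s) - B s - 2 * (B s - 2 * F s)) s :=
      (hB' s hs.self_of_nhds).sub ((hF' s hs.self_of_nhds).const_mul 2)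
    rw [hderiv.deriv_eq, hderiv'.deriv]
    ring
  refine hF.prodMk_nhds (Tendsto.prodMk_nhds ?_ ?_)
  · have := hB.sub (hF.const_mul 2)
    rw [sub_self] at this
    exact this.congr' <| by
      filter_upwards [hexp] with s hs using (hF' s hs.self_of_nhds).deriv.symm
  · have := (hC.sub (hB.const_mul 3)).add (hF.const_mul 4)
    rw [show 2 * κ - 3 * (2 * κ) + 4 * κ = 0 by ring] at this
    exact this.congr' (by filter_upwards [hF''] with s hs using hs.symm)

theorem ContDiffOn.differentiableAt_iterate_deriv {f : ℝ → ℝ} {s : Set ℝ} {m k : ℕ}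
    (hf : ContDiffOn ℝ m f s) (hs : IsOpen s) (hk : k < m) {x : ℝ} (hx : x ∈ s) :
    DifferentiableAt ℝ (deriv^[k] f) x := by
  induction k generalizing f m with
  | zero => exact (hf.differentiableOn (by norm_cast; omega)).differentiableAt (hs.mem_nhds hx)
  | succ k ih =>
    obtain ⟨m, rfl⟩ : ∃ m', m = m' + 1 := ⟨m - 1, by omega⟩
    exact ih (hf.deriv_of_isOpen hs (by norm_cast)) (by omega)

theorem isBigO_iterate_deriv_three_of_thinFilm_ode {n κ δ : ℝ} {H : ℝ → ℝ}
    (hκ : 0 < κ) (hδ : 0 < δ)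
    (hpos : ∀ x ∈ Ioo 0 δ, 0 < H x)
    (hode : ∀ x ∈ Ioo 0 δ, H x ^ (n - 1) * deriv^[3] H x = -1 + x)
    (hasym : Tendsto (fun x => H x / x ^ 2) (𝓝[>] 0) (𝓝 κ)) :
    deriv^[3] H =O[𝓝[>] 0] fun x => x ^ (2 - 2 * n) := by
  have hcoef : Tendsto (fun x => (-1 + x) * (H x / x ^ 2) ^ (1 - n)) (𝓝[>] 0)
      (𝓝 ((-1 + 0) * κ ^ (1 - n))) :=
    (tendsto_const_nhds.add (tendsto_nhdsWithin_of_tendsto_nhds tendsto_id)).mul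
      (hasym.rpow_const (.inl hκ.ne'))
  refine ((hcoef.isBigO_one ℝ).mul (isBigO_refl (fun x : ℝ => x ^ (2 - 2 * n)) _)).congr'
    ?_ (by simp)
  filter_upwards [Ioo_mem_nhdsGT hδ] with x hx
  have hHx := hpos x hx
  have hsolve : deriv^[3] H x = (-1 + x) * H x ^ (1 - n) := by
    rw [← hode x hx, mul_comm, ← mul_assoc, ← rpow_add hHx]
    simp
  have hsplit : H x ^ (1 - n) = (H x / x ^ 2) ^ (1 - n) * x ^ (2 - 2 * n) := by
    rw [div_rpow hHx.le (by positivity), ← rpow_natCast, ← rpow_mul hx.1.le]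
    push_cast
    rw [show (2 : ℝ) * (1 - n) = 2 - 2 * n by ring,
      div_mul_cancel₀ _ (rpow_pos_of_pos hx.1 _).ne']
  rw [hsolve, hsplit]
  ring

theorem thinfilm_trajectory_converges_general (n κ δ : ℝ) (hn : n < 3 / 2)
    (hκ : 0 < κ) (hδ : 0 < δ) (H : ℝ → ℝ)
    (hreg : ContDiffOn ℝ 3 H (Set.Ioo 0 δ))
    (hpos : ∀ x ∈ Set.Ioo (0:ℝ) δ, 0 < H x)
    (hode : ∀ x ∈ Set.Ioo (0:ℝ) δ, H x ^ (n - 1) * deriv^[3] H x = -1 + x)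
    (hasym : Filter.Tendsto (fun x : ℝ => H x / x ^ 2)
      (nhdsWithin 0 (Set.Ioi 0)) (nhds κ)) :
    Filter.Tendsto (fun x : ℝ => deriv H x / x) (nhdsWithin 0 (Set.Ioi 0)) (nhds (2 * κ)) ∧
    Filter.Tendsto (fun x : ℝ => deriv (deriv H) x) (nhdsWithin 0 (Set.Ioi 0))
      (nhds (2 * κ)) ∧
    Filter.Tendsto
      (fun s : ℝ =>
        (Real.exp ((4 - 2*n) * s), Real.exp ((3 - 2*n) * s),
          Real.exp (-2*s) * H (Real.exp s),
          deriv (fun t : ℝ => Real.exp (-2*t) * H (Real.exp t)) s,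
          deriv (deriv (fun t : ℝ => Real.exp (-2*t) * H (Real.exp t))) s))
      Filter.atBot (nhds (0, 0, κ, 0, 0)) := by
  have hdiff : ∀ k < 3, ∀ᶠ x in 𝓝[>] 0, DifferentiableAt ℝ (deriv^[k] H) x := fun k hk => by
    filter_upwards [Ioo_mem_nhdsGT hδ] with x hx
    exact hreg.differentiableAt_iterate_deriv isOpen_Ioo hk hx
  obtain ⟨L₂, hL₂⟩ := exists_tendsto_nhdsGT_zero_of_deriv_isBigO_rpow
    (by linarith : -1 < 2 - 2 * n) (hdiff 2 (by norm_num))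
    (isBigO_iterate_deriv_three_of_thinFilm_ode hκ hδ hpos hode hasym)
  obtain ⟨L₁, hL₁⟩ := exists_tendsto_nhdsGT_zero_of_deriv_isBigO_rpow (r := 0)
    (by norm_num) (hdiff 1 (by norm_num)) (by simpa using hL₂.isBigO_one ℝ)
  have hdiff₀₁ := (hdiff 0 (by norm_num)).and (hdiff 1 (by norm_num))
  obtain ⟨h₁, h₂⟩ :=
    tendsto_deriv_div_and_deriv_deriv_of_tendsto_div_sq hdiff₀₁ hasym hL₁ hL₂
  have hexp : ∀ {c : ℝ}, 0 < c → Tendsto (fun s => exp (c * s)) atBot (𝓝 0) := fun hc =>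
    tendsto_exp_atBot.comp (tendsto_id.const_mul_atBot hc)
  exact ⟨h₁, h₂, (hexp (by linarith)).prodMk_nhds ((hexp (by linarith)).prodMk_nhds
    (tendsto_rescaled_trajectory_atBot hdiff₀₁ hasym h₁ h₂))⟩

/-- If `H` solves the similarity ODE `H^{n-1} H''' = -1 + x` near the contact line with
`H > 0` and `H = κ x² (1 + o(1))` as `x ↘ 0`, then also `H' = 2κx(1+o(1))`,
`H'' = 2κ(1+o(1))`, and in the dynamical-systems coordinates `s = log x`, `F = e^{-2s}H(e^s)`,
the trajectory `(e^{(4-2n)s}, e^{(3-2n)s}, F, F', F'')` converges to `p_κ = (0,0,κ,0,0)`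
as `s → -∞`. -/
theorem thinfilm_trajectory_converges (n κ δ : ℝ) (hn0 : 0 < n) (hn : n < 3 / 2)
    (hκ : 0 < κ) (hδ : 0 < δ) (H : ℝ → ℝ)
    (hreg : ContDiffOn ℝ 3 H (Set.Ioo 0 δ))
    (hpos : ∀ x ∈ Set.Ioo (0:ℝ) δ, 0 < H x)
    (hode : ∀ x ∈ Set.Ioo (0:ℝ) δ, H x ^ (n - 1) * deriv^[3] H x = -1 + x)
    (hasym : Filter.Tendsto (fun x : ℝ => H x / x ^ 2)
      (nhdsWithin 0 (Set.Ioi 0)) (nhds κ)) :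
    Filter.Tendsto (fun x : ℝ => deriv H x / x) (nhdsWithin 0 (Set.Ioi 0)) (nhds (2 * κ)) ∧
    Filter.Tendsto (fun x : ℝ => deriv (deriv H) x) (nhdsWithin 0 (Set.Ioi 0))
      (nhds (2 * κ)) ∧
    Filter.Tendsto
      (fun s : ℝ =>
        (Real.exp ((4 - 2*n) * s), Real.exp ((3 - 2*n) * s),
          Real.exp (-2*s) * H (Real.exp s),
          deriv (fun t : ℝ => Real.exp (-2*t) * H (Real.exp t)) s,
          deriv (deriv (fun t : ℝ => Real.exp (-2*t) * H (Real.exp t))) s))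
      Filter.atBot (nhds (0, 0, κ, 0, 0)) :=
  thinfilm_trajectory_converges_general n κ δ hn hκ hδ H hreg hpos hode hasym
end

section
/- Let n ∈ (0,3), and for n ≠ 2 suppose additionally θ > 0 so that θ^{1−n} is defined. The tangent space at p_θ = (0,0,θ,0,0) to the unstable invariant set of system (S̃) — namely, the (generalized) eigenspace of the Jacobian Ã (rows (1,0,0,0,0), (0,3−n,0,0,0), (0,0,0,1,0), (0,0,0,0,1), (0,−θ^{1−n},0,1,0)) corresponding to the eigenvalues with positive real part, translated to pass through p_θ — is exactly the three-dimensional affine subspace of ℝ⁵ given by the two equations F′ = −θ^{1−n} x₂/((n−3)(n−4)) + F − θ and F″ = θ^{1−n} x₂/(n−3) + F − θ. This holds both for n ≠ 2 (where à is diagonalizable on this eigenspace) and for n = 2 (where the generalized eigenspace of the triple eigenvalue 1 is used). -/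
/-!
The vectors `(0, θ^{1-n}, n-3, 0, 3-n)` and `(0, θ^{1-n}, 0, n-4, 4-n)` are left eigenvectors
of `Ã` for its stable eigenvalues `0` and `-1`, so they annihilate the generalized eigenspaces
of the eigenvalues `1` and `3-n`; their two kernels are exactly the two equations. Conversely,
every vector satisfying the equations is killed by `(Ã - 1)(Ã - (3-n))`, and the kernel of such
a product lies in the sum of the two generalized eigenspaces, also in the resonant case `n = 2`.
-/

open Matrix

noncomputable def Atil (n θ : ℝ) : Matrix (Fin 5) (Fin 5) ℝ :=
  !![1, 0,            0, 0, 0;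
     0, 3 - n,        0, 0, 0;
     0, 0,            0, 1, 0;
     0, 0,            0, 0, 1;
     0, -θ ^ (1 - n), 0, 1, 0]

theorem Matrix.dotProduct_eq_zero_of_vecMul_eq_smul_of_mem_maxGenEigenspace {R n : Type*}
    [CommRing R] [NoZeroDivisors R] [Fintype n] [DecidableEq n] {A : Matrix n n R}
    {r v : n → R} {μ ν : R} (hr : r ᵥ* A = ν • r) (hne : ν ≠ μ)
    (hv : v ∈ Module.End.maxGenEigenspace (toLin' A) μ) : r ⬝ᵥ v = 0 := by
  obtain ⟨k, hk⟩ := (Module.End.mem_maxGenEigenspace _ _ _).1 hv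
  have hshift : r ᵥ* (A - μ • 1) = (ν - μ) • r := by
    rw [vecMul_sub, hr, vecMul_smul, vecMul_one, sub_smul]
  have hpow : ∀ k : ℕ, r ᵥ* (A - μ • 1) ^ k = (ν - μ) ^ k • r := by
    intro k
    induction k with
    | zero => simp
    | succ k ih => rw [pow_succ, ← vecMul_vecMul, ih, smul_vecMul, hshift, smul_smul, pow_succ]
  have hlin : toLin' A - μ • 1 = toLin' (A - μ • 1) := by
    rw [map_sub, map_smul, toLin'_one]
    rfl
  rw [hlin, ← toLin'_pow, toLin'_apply] at hk
  have hdot := congrArg (r ⬝ᵥ ·) hk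
  simp only [dotProduct_mulVec, hpow, smul_dotProduct, dotProduct_zero, smul_eq_mul] at hdot
  exact (mul_eq_zero.1 hdot).resolve_left (pow_ne_zero _ (sub_ne_zero.2 hne))

theorem Matrix.dotProduct_eq_zero_of_vecMul_eq_smul_of_mem_sup_maxGenEigenspace
    {R n : Type*} [CommRing R] [NoZeroDivisors R] [Fintype n] [DecidableEq n]
    {A : Matrix n n R} {r v : n → R} {μ₁ μ₂ ν : R} (hr : r ᵥ* A = ν • r) (hne₁ : ν ≠ μ₁)
    (hne₂ : ν ≠ μ₂)
    (hv : v ∈ Module.End.maxGenEigenspace (toLin' A) μ₁ ⊔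
      Module.End.maxGenEigenspace (toLin' A) μ₂) :
    r ⬝ᵥ v = 0 := by
  obtain ⟨a, ha, b, hb, rfl⟩ := Submodule.mem_sup.1 hv
  rw [dotProduct_add, dotProduct_eq_zero_of_vecMul_eq_smul_of_mem_maxGenEigenspace hr hne₁ ha,
    dotProduct_eq_zero_of_vecMul_eq_smul_of_mem_maxGenEigenspace hr hne₂ hb, add_zero]

/-- For `μ ≠ ν` the splitting is `v = ((f - ν) v - (f - μ) v) / (μ - ν)`. -/
theorem Module.End.mem_sup_maxGenEigenspace_of_mul_apply_eq_zero {K V : Type*} [Field K]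
    [AddCommGroup V] [Module K V] {f : Module.End K V} {μ ν : K} {v : V}
    (hv : ((f - μ • 1) * (f - ν • 1)) v = 0) :
    v ∈ Module.End.maxGenEigenspace f μ ⊔ Module.End.maxGenEigenspace f ν := by
  by_cases hμν : μ = ν
  · subst hμν
    exact Submodule.mem_sup_left ((mem_maxGenEigenspace f μ v).2 ⟨2, by rwa [sq]⟩)
  have hcomm : Commute (f - μ • 1) (f - ν • 1) :=
    ((Commute.refl f).sub_right ((Commute.one_right f).smul_right ν)).sub_left
      ((Commute.one_left _).smul_left μ)
  have hsplit : v = (μ - ν)⁻¹ • ((f - ν • 1) v - (f - μ • 1) v) := by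
    simp only [LinearMap.sub_apply, LinearMap.smul_apply, one_apply]
    rw [sub_sub_sub_cancel_left, ← sub_smul, smul_smul, inv_mul_cancel₀ (sub_ne_zero.2 hμν),
      one_smul]
  rw [hsplit]
  refine Submodule.smul_mem _ _ (Submodule.sub_mem _ (Submodule.mem_sup_left ?_)
    (Submodule.mem_sup_right ?_))
  · exact (mem_maxGenEigenspace f μ _).2 ⟨1, by rwa [pow_one, ← mul_apply]⟩
  · exact (mem_maxGenEigenspace f ν _).2 ⟨1, by rwa [pow_one, ← mul_apply, ← hcomm.eq]⟩

theorem Atil_toLin'_apply (n θ : ℝ) (x : Fin 5 → ℝ) :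
    toLin' (Atil n θ) x = ![x 0, (3 - n) * x 1, x 3, x 4, -θ ^ (1 - n) * x 1 + x 3] := by
  funext i
  fin_cases i <;> simp [Atil, toLin'_apply, mulVec, dotProduct, Fin.sum_univ_five]

theorem vecMul_Atil_eq_zero (n θ : ℝ) : ![0, θ ^ (1 - n), n - 3, 0, 3 - n] ᵥ* Atil n θ = 0 := by
  funext i
  fin_cases i <;> simp [Atil, vecMul, dotProduct, Fin.sum_univ_five]
  ring

theorem vecMul_Atil_eq_neg (n θ : ℝ) :
    ![0, θ ^ (1 - n), 0, n - 4, 4 - n] ᵥ* Atil n θ = -![0, θ ^ (1 - n), 0, n - 4, 4 - n] := by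
  funext i
  fin_cases i <;> simp [Atil, vecMul, dotProduct, Fin.sum_univ_five]
  ring

theorem Atil_sub_one_mul_sub_apply_eq_zero {n θ : ℝ} (hn3 : n ≠ 3) (hn4 : n ≠ 4)
    {z : Fin 5 → ℝ} (h3 : z 3 = -θ ^ (1 - n) * z 1 / ((n - 3) * (n - 4)) + z 2)
    (h4 : z 4 = θ ^ (1 - n) * z 1 / (n - 3) + z 2) :
    ((toLin' (Atil n θ) - (1 : ℝ) • 1) * (toLin' (Atil n θ) - (3 - n) • 1)) z = 0 := by
  have hn3' : n - 3 ≠ 0 := sub_ne_zero.2 hn3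
  have hn4' : n - 4 ≠ 0 := sub_ne_zero.2 hn4
  set p := (n - 2) * z 2 - θ ^ (1 - n) * z 1 / ((n - 3) * (n - 4))
  have hinner : (toLin' (Atil n θ) - (3 - n) • 1) z = ![(n - 2) * z 0, 0, p, p, p] := by
    rw [LinearMap.sub_apply, LinearMap.smul_apply, Module.End.one_apply, Atil_toLin'_apply]
    funext i
    fin_cases i <;> simp [p, h3, h4] <;> field_simp <;> ring
  rw [Module.End.mul_apply, hinner, LinearMap.sub_apply, LinearMap.smul_apply,
    Module.End.one_apply, Atil_toLin'_apply]
  funext i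
  fin_cases i <;> simp

theorem Atil_mem_sup_maxGenEigenspace_iff {n θ : ℝ} (hn3 : n ≠ 3) (hn4 : n ≠ 4)
    (z : Fin 5 → ℝ) :
    z ∈ Module.End.maxGenEigenspace (toLin' (Atil n θ)) 1 ⊔
        Module.End.maxGenEigenspace (toLin' (Atil n θ)) (3 - n) ↔
      z 3 = -θ ^ (1 - n) * z 1 / ((n - 3) * (n - 4)) + z 2 ∧
        z 4 = θ ^ (1 - n) * z 1 / (n - 3) + z 2 := by
  have hn3' : n - 3 ≠ 0 := sub_ne_zero.2 hn3
  have hn4' : n - 4 ≠ 0 := sub_ne_zero.2 hn4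
  constructor
  · intro hz
    have h₀ := dotProduct_eq_zero_of_vecMul_eq_smul_of_mem_sup_maxGenEigenspace
      (by rw [zero_smul]; exact vecMul_Atil_eq_zero n θ) zero_ne_one
      (by intro h; apply hn3'; linarith) hz
    have h₁ := dotProduct_eq_zero_of_vecMul_eq_smul_of_mem_sup_maxGenEigenspace
      (by rw [neg_one_smul]; exact vecMul_Atil_eq_neg n θ) (by norm_num)
      (by intro h; apply hn4'; linarith) hz
    simp only [dotProduct, Fin.sum_univ_five, Fin.isValue, cons_val_zero, cons_val_one, cons_val,
      zero_mul, zero_add, add_zero] at h₀ h₁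
    constructor
    · field_simp
      linear_combination (n - 3) * h₁ - (n - 4) * h₀
    · field_simp
      linear_combination -h₀
  · rintro ⟨h3, h4⟩
    exact Module.End.mem_sup_maxGenEigenspace_of_mul_apply_eq_zero
      (Atil_sub_one_mul_sub_apply_eq_zero hn3 hn4 h3 h4)

theorem tilde_unstable_eigenspace_general (n θ : ℝ) (hn3 : n < 3) :
    ∀ y : Fin 5 → ℝ,
      (y - ![0, 0, θ, 0, 0]) ∈
        (Module.End.maxGenEigenspace (Matrix.toLin' (Atil n θ)) 1 ⊔
          Module.End.maxGenEigenspace (Matrix.toLin' (Atil n θ)) (3 - n)) ↔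
      (y 3 = -θ ^ (1 - n) * y 1 / ((n - 3) * (n - 4)) + y 2 - θ ∧
        y 4 = θ ^ (1 - n) * y 1 / (n - 3) + y 2 - θ) := by
  intro y
  rw [Atil_mem_sup_maxGenEigenspace_iff hn3.ne (by linarith)]
  simp [add_sub_assoc]

/-- The unstable (generalized) eigenspace of `Ã` — the sum of the generalized eigenspaces
for the eigenvalues `1` and `3-n` with positive real part — translated to pass through
`p_θ = (0,0,θ,0,0)`, is exactly the affine subspace of `ℝ⁵` (coordinates
`(x₁,x₂,F,F′,F″) = (y 0, y 1, y 2, y 3, y 4)`) cut out by the two equations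
`F′ = -θ^{1-n} x₂/((n-3)(n-4)) + F - θ` and `F″ = θ^{1-n} x₂/(n-3) + F - θ`. -/
theorem tilde_unstable_eigenspace (n θ : ℝ) (hn0 : 0 < n) (hn3 : n < 3) (hθ : 0 < θ) :
    ∀ y : Fin 5 → ℝ,
      (y - ![0, 0, θ, 0, 0]) ∈
        (Module.End.maxGenEigenspace (Matrix.toLin' (Atil n θ)) 1 ⊔
          Module.End.maxGenEigenspace (Matrix.toLin' (Atil n θ)) (3 - n)) ↔
      (y 3 = -θ ^ (1 - n) * y 1 / ((n - 3) * (n - 4)) + y 2 - θ ∧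
        y 4 = θ ^ (1 - n) * y 1 / (n - 3) + y 2 - θ) :=
  tilde_unstable_eigenspace_general n θ hn3
end

section
/- Let n ∈ (0,3). There exists a multi-index q = (q₁,q₂,q₃) ∈ ℕ₀³ with q₁ + q₂ + q₃ ≥ 2 satisfying the resonance equation q₁ + (3−n) q₂ + q₃ = 1 if and only if n = 3 − 1/m for some integer m ≥ 2; in that case the unique such multi-index is q = (0, m, 0). Moreover, for the resonance equation with target eigenvalue 3−n, i.e. q₁ + (3−n) q₂ + q₃ = 3−n with q₁ + q₂ + q₃ ≥ 2, no solution exists with q₂ ≥ 1. -/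
/-!
Put `λ = 3 - n > 0`. Since every term of `a + λ b + c` is non-negative and `a, c` are integers,
the value `1` forces either `b = 0, a + c = 1` (excluded by `|q| ≥ 2`) or `a = c = 0, λ b = 1`;
so the resonances are exactly `(0, m, 0)` with `λ = 1 / m`, `m ≥ 2`. The value `λ` with `b ≥ 1`
is out of reach: `b = 1` forces `a = c = 0`, so `|q| = 1`, and `b ≥ 2` already gives `λ b > λ`.
-/

section Resonance

variable {l : ℝ} {a b c : ℕ}

lemma resonance_eq_one_iff (hl : 0 < l) :
    (2 ≤ a + b + c ∧ (a : ℝ) + l * b + c = 1) ↔ a = 0 ∧ c = 0 ∧ 2 ≤ b ∧ l * b = 1 := by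
  constructor
  · rintro ⟨hsum, heq⟩
    obtain rfl | hb := Nat.eq_zero_or_pos b
    · have : a + c = 1 := by exact_mod_cast (show ((a + c : ℕ) : ℝ) = 1 by push_cast at heq ⊢; linarith)
      omega
    · have hlb : 0 < l * b := mul_pos hl (by exact_mod_cast hb)
      have : a + c < 1 := by exact_mod_cast (show ((a + c : ℕ) : ℝ) < 1 by push_cast; linarith)
      obtain ⟨rfl, rfl⟩ : a = 0 ∧ c = 0 := by omega
      exact ⟨rfl, rfl, by omega, by simpa using heq⟩
  · rintro ⟨rfl, rfl, hb, hlb⟩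
    exact ⟨by omega, by push_cast; linarith⟩

lemma resonance_ne_self (hl : 0 < l) (hsum : 2 ≤ a + b + c) (hb : 1 ≤ b) :
    (a : ℝ) + l * b + c ≠ l := by
  intro heq
  obtain rfl | hb2 : b = 1 ∨ 2 ≤ b := by omega
  · have : a + c = 0 := by exact_mod_cast (show ((a + c : ℕ) : ℝ) = 0 by push_cast at heq ⊢; linarith)
    omega
  · have hlb : l < l * b := lt_mul_of_one_lt_right hl (by exact_mod_cast hb2)
    linarith [Nat.cast_nonneg (α := ℝ) a, Nat.cast_nonneg (α := ℝ) c]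

end Resonance

lemma sub_mul_eq_one_iff_eq_sub_one_div {k n x : ℝ} (hx : x ≠ 0) :
    (k - n) * x = 1 ↔ n = k - 1 / x := by
  constructor <;> intro h
  · field_simp; linarith
  · subst h; field_simp; ring

theorem resonance_classification_general (n : ℝ) (hn3 : n < 3) :
    ((∃ q : ℕ × ℕ × ℕ, 2 ≤ q.1 + q.2.1 + q.2.2 ∧
        (q.1 : ℝ) + (3 - n) * (q.2.1 : ℝ) + (q.2.2 : ℝ) = 1) ↔
      (∃ m : ℕ, 2 ≤ m ∧ n = 3 - 1 / (m : ℝ))) ∧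
    (∀ m : ℕ, 2 ≤ m → n = 3 - 1 / (m : ℝ) →
      ∀ q : ℕ × ℕ × ℕ, 2 ≤ q.1 + q.2.1 + q.2.2 →
        (q.1 : ℝ) + (3 - n) * (q.2.1 : ℝ) + (q.2.2 : ℝ) = 1 → q = (0, m, 0)) ∧
    (∀ q : ℕ × ℕ × ℕ, 2 ≤ q.1 + q.2.1 + q.2.2 → 1 ≤ q.2.1 →
      (q.1 : ℝ) + (3 - n) * (q.2.1 : ℝ) + (q.2.2 : ℝ) ≠ 3 - n) := by
  have hl : 0 < 3 - n := by linarith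
  refine ⟨⟨?_, ?_⟩, ?_, ?_⟩
  · rintro ⟨⟨a, b, c⟩, hres⟩
    obtain ⟨-, -, hb, hlb⟩ := (resonance_eq_one_iff (a := a) (b := b) (c := c) hl).mp hres
    exact ⟨b, hb, (sub_mul_eq_one_iff_eq_sub_one_div (Nat.cast_ne_zero.mpr (by omega))).mp hlb⟩
  · rintro ⟨m, hm, hn⟩
    have hlm : (3 - n) * (m : ℝ) = 1 :=
      (sub_mul_eq_one_iff_eq_sub_one_div (Nat.cast_ne_zero.mpr (by omega))).mpr hn
    exact ⟨(0, m, 0), (resonance_eq_one_iff hl).mpr ⟨rfl, rfl, hm, hlm⟩⟩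
  · rintro m hm hn ⟨a, b, c⟩ hsum heq
    obtain ⟨rfl, rfl, hb, hlb⟩ := (resonance_eq_one_iff (a := a) (b := b) (c := c) hl).mp ⟨hsum, heq⟩
    have hnb : n = 3 - 1 / (b : ℝ) :=
      (sub_mul_eq_one_iff_eq_sub_one_div (Nat.cast_ne_zero.mpr (by omega))).mp hlb
    have hbm : (b : ℝ) = m := by simpa using hnb.symm.trans hn
    simp only [Prod.mk.injEq, true_and, and_true]
    exact_mod_cast hbm
  · rintro ⟨a, b, c⟩ hsum hb
    exact resonance_ne_self hl hsum hb

/-- Classification of Poincaré–Dulac resonances `q^⊤ Λ̃ = λ̃_k`, `|q| ≥ 2`, for the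
eigenvalue vector `Λ̃ = (1, 3-n, 1)` of the flow on the unstable manifold, `n ∈ (0,3)`:
a resonance with target eigenvalue `1` exists iff `n = 3 - 1/m` for some integer `m ≥ 2`,
in which case the unique resonant multi-index is `q = (0, m, 0)`; and the resonance
equation with target eigenvalue `3-n` has no solution with `q₂ ≥ 1`. -/
theorem resonance_classification (n : ℝ) (hn0 : 0 < n) (hn3 : n < 3) :
    ((∃ q : ℕ × ℕ × ℕ, 2 ≤ q.1 + q.2.1 + q.2.2 ∧
        (q.1 : ℝ) + (3 - n) * (q.2.1 : ℝ) + (q.2.2 : ℝ) = 1) ↔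
      (∃ m : ℕ, 2 ≤ m ∧ n = 3 - 1 / (m : ℝ))) ∧
    (∀ m : ℕ, 2 ≤ m → n = 3 - 1 / (m : ℝ) →
      ∀ q : ℕ × ℕ × ℕ, 2 ≤ q.1 + q.2.1 + q.2.2 →
        (q.1 : ℝ) + (3 - n) * (q.2.1 : ℝ) + (q.2.2 : ℝ) = 1 → q = (0, m, 0)) ∧
    (∀ q : ℕ × ℕ × ℕ, 2 ≤ q.1 + q.2.1 + q.2.2 → 1 ≤ q.2.1 →
      (q.1 : ℝ) + (3 - n) * (q.2.1 : ℝ) + (q.2.2 : ℝ) ≠ 3 - n) :=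
  resonance_classification_general n hn3
end

section
/- Let n ∈ (0, 3/2) and let H be the solution of the similarity ODE H^{n−1}H''' = −1 + x on an interval (0, x₀) with H > 0, H(0) = 0, H'(0) = 0, and leading-order asymptotic H(x) = κ x²(1 + o(1)) as x ↘ 0 for some κ > 0. Then there is a constant C > 0 depending only on n such that, as x ↘ 0, H(x) = κ x² (1 + R₀(x)), H'(x) = 2κ x (1 + R₁(x)), and H''(x) = 2κ (1 + R₂(x)), where |R_i(x)| ≤ C (κ^{−n} x^{3−2n} + κ^{−n} x^{4−2n}) for i = 0, 1, 2 and all sufficiently small x > 0. -/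
/-!
Near the contact line `H ≍ κ x²`, so the equation `H''' = (x - 1) H^{1-n}` gives
`|H'''| ≤ 2^{|1-n|} κ^{1-n} x^{2-2n}`, which is integrable at `0` because `n < 3/2`.
Integrating three times from the contact line yields
`H'' = L₂ + O(x^{3-2n})`, `H' = L₁ + L₂ x + O(x^{4-2n})`, `H = L₀ + L₁ x + L₂ x²/2 + O(x^{5-2n})`
with explicit constants, and `H / x² → κ` forces `L₀ = L₁ = 0`, `L₂ = 2κ`.
-/

open Set Filter Topology MeasureTheory intervalIntegral

theorem rpow_le_two_rpow_abs_mul_rpow {y b p : ℝ} (hb : 0 < b) (hlo : b / 2 ≤ y)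
    (hhi : y ≤ 2 * b) : y ^ p ≤ 2 ^ |p| * b ^ p := by
  rcases le_total 0 p with hp | hp
  · calc y ^ p ≤ (2 * b) ^ p := Real.rpow_le_rpow (by linarith) hhi hp
      _ = 2 ^ |p| * b ^ p := by rw [abs_of_nonneg hp, Real.mul_rpow zero_le_two hb.le]
  · calc y ^ p ≤ (b / 2) ^ p := Real.rpow_le_rpow_of_nonpos (by positivity) hlo hp
      _ = 2 ^ |p| * b ^ p := by
        rw [abs_of_nonpos hp, Real.div_rpow hb.le zero_le_two, Real.rpow_neg zero_le_two]
        ring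

theorem abs_le_of_rpow_mul_eq_neg_one_add {x y z κ n : ℝ} (hκ : 0 < κ) (hx : 0 < x)
    (hx1 : x ≤ 1) (hlo : κ / 2 * x ^ 2 ≤ y) (hhi : y ≤ 2 * κ * x ^ 2)
    (h : y ^ (n - 1) * z = -1 + x) :
    |z| ≤ 2 ^ |1 - n| * κ ^ (1 - n) * x ^ (2 * (1 - n)) := by
  have hy : 0 < y := lt_of_lt_of_le (by positivity) hlo
  have hz : z = (-1 + x) * y ^ (1 - n) := by
    rw [← h, mul_right_comm, ← Real.rpow_add hy]
    simp
  have hyp : y ^ (1 - n) ≤ 2 ^ |1 - n| * (κ * x ^ 2) ^ (1 - n) :=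
    rpow_le_two_rpow_abs_mul_rpow (by positivity) (by linarith) (by linarith)
  rw [Real.mul_rpow hκ.le (sq_nonneg x), ← Real.rpow_natCast, ← Real.rpow_mul hx.le] at hyp
  push_cast at hyp
  rw [hz, abs_mul, abs_of_nonneg (Real.rpow_nonneg hy.le _), abs_of_nonpos (by linarith)]
  nlinarith [Real.rpow_nonneg hy.le (1 - n)]

theorem eventually_half_mul_le_and_le_two_mul_of_tendsto_div {α : Type*} {l : Filter α}
    {f g : α → ℝ} {κ : ℝ} (hκ : 0 < κ) (hg : ∀ᶠ x in l, 0 < g x)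
    (h : Tendsto (fun x => f x / g x) l (𝓝 κ)) :
    ∀ᶠ x in l, κ / 2 * g x ≤ f x ∧ f x ≤ 2 * κ * g x := by
  filter_upwards [hg, h (Icc_mem_nhds (by linarith : κ / 2 < κ) (by linarith : κ < 2 * κ))]
    with x hgx hx
  rw [mem_preimage, mem_Icc, le_div_iff₀ hgx, div_le_iff₀ hgx] at hx
  exact hx

theorem exists_abs_sub_le_div_mul_rpow_of_hasDerivAt {f g : ℝ → ℝ} {a K p : ℝ} (hp : 0 < p)
    (hf : ∀ x ∈ Ioc 0 a, HasDerivAt f (g x) x) (hg : ContinuousOn g (Ioc 0 a))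
    (hbound : ∀ x ∈ Ioc 0 a, |g x| ≤ K * x ^ (p - 1)) :
    ∃ L, ∀ t ∈ Ioc 0 a, |f t - L| ≤ K / p * t ^ p := by
  have hq : -1 < p - 1 := by linarith
  have hdom : ∀ t, IntervalIntegrable (fun s => K * s ^ (p - 1)) volume 0 t := fun t =>
    (intervalIntegrable_rpow' hq).const_mul K
  have hint : ∀ t ∈ Ioc 0 a, IntervalIntegrable g volume 0 t := by
    intro t ht
    have hsub : Ioc 0 t ⊆ Ioc 0 a := Ioc_subset_Ioc_right ht.2
    rw [intervalIntegrable_iff_integrableOn_Ioc_of_le ht.1.le]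
    exact (hdom t).1.mono' ((hg.mono hsub).aestronglyMeasurable measurableSet_Ioc)
      ((ae_restrict_iff' measurableSet_Ioc).mpr (ae_of_all _ fun s hs => hbound s (hsub hs)))
  refine ⟨f a - ∫ s in 0..a, g s, fun t ht => ?_⟩
  have hsub : uIcc t a ⊆ Ioc 0 a := by
    rw [uIcc_of_le ht.2]
    exact Icc_subset_Ioc_iff ht.2 |>.mpr ⟨ht.1, le_rfl⟩
  have hta : ∫ s in t..a, g s = f a - f t :=
    integral_eq_sub_of_hasDerivAt (fun x hx => hf x (hsub hx)) ((hg.mono hsub).intervalIntegrable)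
  have hsplit := integral_add_adjacent_intervals (hint t ht) ((hg.mono hsub).intervalIntegrable)
  rw [show f t - (f a - ∫ s in 0..a, g s) = ∫ s in 0..t, g s by linarith, ← Real.norm_eq_abs]
  calc ‖∫ s in 0..t, g s‖ ≤ ∫ s in 0..t, K * s ^ (p - 1) :=
        norm_integral_le_of_norm_le ht.1.le
          (ae_of_all _ fun s hs => hbound s ⟨hs.1, hs.2.trans ht.2⟩) (hdom t)
    _ = K / p * t ^ p := by
        rw [intervalIntegral.integral_const_mul, integral_rpow (Or.inl hq), sub_add_cancel,
          Real.zero_rpow hp.ne']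
        ring

theorem exists_taylor_bounds_of_abs_third_deriv_le_rpow {f₀ f₁ f₂ f₃ : ℝ → ℝ} {a M p : ℝ}
    (ha : 0 < a) (hp : 0 < p) (h₀ : ∀ x ∈ Ioc 0 a, HasDerivAt f₀ (f₁ x) x)
    (h₁ : ∀ x ∈ Ioc 0 a, HasDerivAt f₁ (f₂ x) x) (h₂ : ∀ x ∈ Ioc 0 a, HasDerivAt f₂ (f₃ x) x)
    (h₃ : ContinuousOn f₃ (Ioc 0 a)) (hbound : ∀ x ∈ Ioc 0 a, |f₃ x| ≤ M * x ^ (p - 1)) :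
    ∃ L₀ L₁ L₂ : ℝ, ∀ t ∈ Ioc 0 a,
      |f₂ t - L₂| ≤ M / p * t ^ p ∧ |f₁ t - (L₁ + L₂ * t)| ≤ M / p * t ^ p * t ∧
        |f₀ t - (L₀ + L₁ * t + L₂ / 2 * t ^ 2)| ≤ M / p * t ^ p * t ^ 2 := by
  have hK : 0 ≤ M / p := by
    have hMa : 0 ≤ M * a ^ (p - 1) := (abs_nonneg _).trans (hbound a ⟨ha, le_rfl⟩)
    exact div_nonneg (nonneg_of_mul_nonneg_left hMa (Real.rpow_pos_of_pos ha _)) hp.le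
  have hcont : ∀ {f g : ℝ → ℝ}, (∀ x ∈ Ioc 0 a, HasDerivAt f (g x) x) → ContinuousOn f (Ioc 0 a) :=
    fun hfg x hx => (hfg x hx).continuousAt.continuousWithinAt
  obtain ⟨L₂, hL₂⟩ := exists_abs_sub_le_div_mul_rpow_of_hasDerivAt hp h₂ h₃ hbound
  obtain ⟨L₁, hL₁⟩ := exists_abs_sub_le_div_mul_rpow_of_hasDerivAt (f := fun t => f₁ t - L₂ * t)
    (g := fun t => f₂ t - L₂) (p := p + 1) (by linarith)
    (fun x hx => by simpa only [mul_one] using (h₁ x hx).fun_sub ((hasDerivAt_id' x).const_mul L₂))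
    ((hcont h₂).sub continuousOn_const) (fun x hx => by simpa using hL₂ x hx)
  obtain ⟨L₀, hL₀⟩ := exists_abs_sub_le_div_mul_rpow_of_hasDerivAt
    (f := fun t => f₀ t - L₂ / 2 * t ^ 2 - L₁ * t) (g := fun t => f₁ t - L₂ * t - L₁)
    (K := M / p / (p + 1)) (p := p + 2) (by linarith)
    (fun x hx => by
      refine (((h₀ x hx).fun_sub ((hasDerivAt_pow 2 x).const_mul (L₂ / 2))).fun_sub
        ((hasDerivAt_id' x).const_mul L₁)).congr_deriv ?_
      norm_num
      ring)
    (((hcont h₁).sub (continuousOn_const.mul continuousOn_id)).sub continuousOn_const)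
    (fun x hx => by simpa only [show p + 2 - 1 = p + 1 by ring] using hL₁ x hx)
  refine ⟨L₀, L₁, L₂, fun t ht => ⟨hL₂ t ht, ?_, ?_⟩⟩
  · calc |f₁ t - (L₁ + L₂ * t)| = |f₁ t - L₂ * t - L₁| := by rw [sub_sub, add_comm]
      _ ≤ M / p / (p + 1) * t ^ (p + 1) := hL₁ t ht
      _ ≤ M / p * t ^ p * t := by
        have ht0 : 0 ≤ t := ht.1.le
        rw [Real.rpow_add_one ht.1.ne', ← mul_assoc]
        gcongr ?_ * _ * _
        exact div_le_self hK (by linarith)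
  · calc |f₀ t - (L₀ + L₁ * t + L₂ / 2 * t ^ 2)| = |f₀ t - L₂ / 2 * t ^ 2 - L₁ * t - L₀| := by
          ring_nf
      _ ≤ M / p / (p + 1) / (p + 2) * t ^ (p + 2) := hL₀ t ht
      _ ≤ M / p * t ^ p * t ^ 2 := by
        have ht0 : 0 ≤ t := ht.1.le
        have hsplit : t ^ (p + 2) = t ^ p * t ^ 2 := by
          exact_mod_cast Real.rpow_add_natCast ht.1.ne' p 2
        rw [hsplit, ← mul_assoc]
        gcongr ?_ * _ * _
        exact (div_le_self (div_nonneg hK (by linarith)) (by linarith)).trans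
          (div_le_self hK (by linarith))

theorem ContDiffOn.exists_taylor_bounds_of_abs_iterate_deriv_le {H : ℝ → ℝ} {x₀ a M p : ℝ}
    (hH : ContDiffOn ℝ 3 H (Ioo 0 x₀)) (ha : 0 < a) (hax : a < x₀) (hp : 0 < p)
    (hbound : ∀ x ∈ Ioc 0 a, |deriv^[3] H x| ≤ M * x ^ (p - 1)) :
    ∃ L₀ L₁ L₂ : ℝ, ∀ t ∈ Ioc 0 a,
      |deriv (deriv H) t - L₂| ≤ M / p * t ^ p ∧
        |deriv H t - (L₁ + L₂ * t)| ≤ M / p * t ^ p * t ∧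
        |H t - (L₀ + L₁ * t + L₂ / 2 * t ^ 2)| ≤ M / p * t ^ p * t ^ 2 := by
  have hU : IsOpen (Ioo 0 x₀) := isOpen_Ioo
  have hsub : Ioc 0 a ⊆ Ioo 0 x₀ := Ioc_subset_Ioo_right hax
  have hH₁ : ContDiffOn ℝ 2 (deriv H) (Ioo 0 x₀) := hH.deriv_of_isOpen hU (by norm_num)
  have hH₂ : ContDiffOn ℝ 1 (deriv (deriv H)) (Ioo 0 x₀) := hH₁.deriv_of_isOpen hU (by norm_num)
  have hderiv : ∀ {f : ℝ → ℝ} {m : WithTop ℕ∞}, ContDiffOn ℝ m f (Ioo 0 x₀) → m ≠ 0 →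
      ∀ x ∈ Ioc 0 a, HasDerivAt f (deriv f x) x := fun hf hm x hx =>
    ((hf.differentiableOn hm x (hsub hx)).differentiableAt (hU.mem_nhds (hsub hx))).hasDerivAt
  exact exists_taylor_bounds_of_abs_third_deriv_le_rpow ha hp (hderiv hH (by norm_num))
    (hderiv hH₁ (by norm_num)) (hderiv hH₂ one_ne_zero)
    ((hH₂.continuousOn_deriv_of_isOpen hU le_rfl).mono hsub) hbound

theorem eq_zero_and_eq_zero_and_eq_of_tendsto_div_sq {c b a κ : ℝ}
    (h : Tendsto (fun t => (c + b * t + a * t ^ 2) / t ^ 2) (𝓝[>] 0) (𝓝 κ)) :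
    c = 0 ∧ b = 0 ∧ a = κ := by
  have hne : ∀ᶠ t in 𝓝[>] (0 : ℝ), t ≠ 0 := eventually_mem_nhdsWithin.mono fun t ht => ht.ne'
  have hid : Tendsto (fun t : ℝ => t) (𝓝[>] 0) (𝓝 0) := nhdsWithin_le_nhds
  have hc : c = 0 := by
    have h0 : Tendsto (fun t => c + b * t + a * t ^ 2) (𝓝[>] 0) (𝓝 (0 ^ 2 * κ)) :=
      ((hid.pow 2).mul h).congr' (hne.mono fun t ht => mul_div_cancel₀ _ (pow_ne_zero 2 ht))
    have hc : Tendsto (fun t => c + b * t + a * t ^ 2) (𝓝[>] 0) (𝓝 c) := by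
      simpa using ((tendsto_const_nhds.add (hid.const_mul b)).add ((hid.pow 2).const_mul a))
    simpa using tendsto_nhds_unique hc h0
  subst hc
  have hb : b = 0 := by
    have h0 : Tendsto (fun t => b + a * t) (𝓝[>] 0) (𝓝 (0 * κ)) :=
      (hid.mul h).congr' (hne.mono fun t ht => by field_simp; ring)
    have hb : Tendsto (fun t => b + a * t) (𝓝[>] 0) (𝓝 b) := by
      simpa using tendsto_const_nhds.add (hid.const_mul a)
    simpa using tendsto_nhds_unique hb h0
  subst hb
  refine ⟨rfl, rfl, tendsto_nhds_unique (tendsto_const_nhds.congr' ?_) h⟩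
  exact hne.mono fun t ht => by field_simp; ring

theorem tendsto_div_sq_of_abs_sub_le_mul_rpow_mul_sq {f P : ℝ → ℝ} {a K p κ : ℝ} (ha : 0 < a)
    (hp : 0 < p) (hf : Tendsto (fun t => f t / t ^ 2) (𝓝[>] 0) (𝓝 κ))
    (hfP : ∀ t ∈ Ioc 0 a, |f t - P t| ≤ K * t ^ p * t ^ 2) :
    Tendsto (fun t => P t / t ^ 2) (𝓝[>] 0) (𝓝 κ) := by
  have hrpow : Tendsto (fun t : ℝ => K * t ^ p) (𝓝[>] 0) (𝓝 0) := by
    simpa [Real.zero_rpow hp.ne'] using ((Real.continuousAt_rpow_const 0 p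
      (Or.inr hp.le)).tendsto.mono_left nhdsWithin_le_nhds).const_mul K
  have herr : Tendsto (fun t => (f t - P t) / t ^ 2) (𝓝[>] 0) (𝓝 0) := by
    refine squeeze_zero_norm' ?_ hrpow
    filter_upwards [Ioc_mem_nhdsGT ha] with t ht
    rw [Real.norm_eq_abs, abs_div, abs_of_pos (pow_pos ht.1 2)]
    exact (div_le_iff₀ (pow_pos ht.1 2)).mpr (hfP t ht)
  simpa only [sub_zero, ← sub_div, sub_sub_cancel] using hf.sub herr

theorem ContDiffOn.abs_sub_taylor_le_of_tendsto_div_sq {H : ℝ → ℝ} {x₀ a κ M p : ℝ}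
    (hH : ContDiffOn ℝ 3 H (Ioo 0 x₀)) (ha : 0 < a) (hax : a < x₀) (hp : 0 < p)
    (hbound : ∀ x ∈ Ioc 0 a, |deriv^[3] H x| ≤ M * x ^ (p - 1))
    (hlim : Tendsto (fun x => H x / x ^ 2) (𝓝[>] 0) (𝓝 κ)) :
    ∀ t ∈ Ioc 0 a, |deriv (deriv H) t - 2 * κ| ≤ M / p * t ^ p ∧
      |deriv H t - 2 * κ * t| ≤ M / p * t ^ p * t ∧ |H t - κ * t ^ 2| ≤ M / p * t ^ p * t ^ 2 := by
  obtain ⟨L₀, L₁, L₂, hT⟩ := hH.exists_taylor_bounds_of_abs_iterate_deriv_le ha hax hp hbound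
  obtain ⟨rfl, rfl, hL₂⟩ := eq_zero_and_eq_zero_and_eq_of_tendsto_div_sq
    (tendsto_div_sq_of_abs_sub_le_mul_rpow_mul_sq ha hp hlim fun t ht => (hT t ht).2.2)
  obtain rfl : L₂ = 2 * κ := by linarith
  simpa using hT

theorem abs_div_sub_one_le_of_abs_sub_le_mul {y d R : ℝ} (hd : 0 < d) (h : |y - d| ≤ R * d) :
    |y / d - 1| ≤ R := by
  rwa [div_sub_one hd.ne', abs_div, abs_of_pos hd, div_le_iff₀ hd]

theorem abs_div_sub_one_le_of_taylor_bounds {y₀ y₁ y₂ κ x E R : ℝ} (hκ : 0 < κ) (hx : 0 < x)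
    (hE : E ≤ R * κ) (h₂ : |y₂ - 2 * κ| ≤ E) (h₁ : |y₁ - 2 * κ * x| ≤ E * x)
    (h₀ : |y₀ - κ * x ^ 2| ≤ E * x ^ 2) :
    |y₀ / (κ * x ^ 2) - 1| ≤ R ∧ |y₁ / (2 * κ * x) - 1| ≤ R ∧ |y₂ / (2 * κ) - 1| ≤ R := by
  have hRκ : 0 ≤ R * κ := (abs_nonneg _).trans (h₂.trans hE)
  refine ⟨abs_div_sub_one_le_of_abs_sub_le_mul (by positivity) ?_,
    abs_div_sub_one_le_of_abs_sub_le_mul (by positivity) ?_,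
    abs_div_sub_one_le_of_abs_sub_le_mul (by positivity) ?_⟩
  · nlinarith [mul_le_mul_of_nonneg_right hE (sq_nonneg x)]
  · nlinarith [mul_le_mul_of_nonneg_right hE hx.le]
  · linarith

theorem contact_line_expansion_bounds_general (n : ℝ) (hn : n < 3 / 2) :
    ∃ C : ℝ, 0 < C ∧
      ∀ (H : ℝ → ℝ) (x₀ κ : ℝ), 0 < x₀ → 0 < κ →
        ContDiffOn ℝ 3 H (Set.Ioo 0 x₀) →
        (∀ x ∈ Set.Ioo (0:ℝ) x₀, 0 < H x) →
        (∀ x ∈ Set.Ioo (0:ℝ) x₀, H x ^ (n - 1) * deriv^[3] H x = -1 + x) →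
        H 0 = 0 →
        derivWithin H (Set.Ici 0) 0 = 0 →
        Filter.Tendsto (fun x : ℝ => H x / x ^ 2) (nhdsWithin 0 (Set.Ioi 0)) (nhds κ) →
        ∃ δ > 0, ∀ x ∈ Set.Ioo (0:ℝ) δ,
          |H x / (κ * x ^ 2) - 1|
              ≤ C * (κ ^ (-n) * x ^ (3 - 2*n) + κ ^ (-n) * x ^ (4 - 2*n)) ∧
          |deriv H x / (2 * κ * x) - 1|
              ≤ C * (κ ^ (-n) * x ^ (3 - 2*n) + κ ^ (-n) * x ^ (4 - 2*n)) ∧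
          |deriv (deriv H) x / (2 * κ) - 1|
              ≤ C * (κ ^ (-n) * x ^ (3 - 2*n) + κ ^ (-n) * x ^ (4 - 2*n)) := by
  have hp : 0 < 3 - 2 * n := by linarith
  refine ⟨2 ^ |1 - n| / (3 - 2 * n), by positivity, ?_⟩
  intro H x₀ κ hx₀ hκ hH _ hODE _ _ hlim
  obtain ⟨a, ha, hsmall⟩ := mem_nhdsGT_iff_exists_Ioc_subset.mp
    ((eventually_half_mul_le_and_le_two_mul_of_tendsto_div hκ
      (eventually_mem_nhdsWithin.mono fun x hx => pow_pos hx 2) hlim).and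
      (Ioo_mem_nhdsGT (lt_min hx₀ one_pos)))
  have hax : a < x₀ := (hsmall ⟨ha, le_rfl⟩).2.2.trans_le (min_le_left _ _)
  have hH₃ : ∀ x ∈ Ioc 0 a,
      |deriv^[3] H x| ≤ 2 ^ |1 - n| * κ ^ (1 - n) * x ^ (3 - 2 * n - 1) := by
    intro x hx
    obtain ⟨⟨hlo, hhi⟩, hx0, hx1⟩ := hsmall hx
    rw [show 3 - 2 * n - 1 = 2 * (1 - n) by ring]
    exact abs_le_of_rpow_mul_eq_neg_one_add hκ hx0 (hx1.le.trans (min_le_right _ _)) hlo hhi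
      (hODE x ⟨hx0, hx1.trans_le (min_le_left _ _)⟩)
  have hT := hH.abs_sub_taylor_le_of_tendsto_div_sq ha hax hp hH₃ hlim
  refine ⟨a, ha, fun x hx => ?_⟩
  obtain ⟨h₂, h₁, h₀⟩ := hT x (Ioo_subset_Ioc_self hx)
  refine abs_div_sub_one_le_of_taylor_bounds hκ hx.1 ?_ h₂ h₁ h₀
  calc 2 ^ |1 - n| * κ ^ (1 - n) / (3 - 2 * n) * x ^ (3 - 2 * n)
      = 2 ^ |1 - n| / (3 - 2 * n) * (κ ^ (-n) * x ^ (3 - 2 * n)) * κ := by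
        rw [sub_eq_add_neg 1 n, add_comm 1 (-n), Real.rpow_add_one hκ.ne']
        ring
    _ ≤ 2 ^ |1 - n| / (3 - 2 * n) * (κ ^ (-n) * x ^ (3 - 2 * n) + κ ^ (-n) * x ^ (4 - 2 * n))
        * κ := by
        have hx0 : 0 ≤ x := hx.1.le
        gcongr
        exact le_add_of_nonneg_right (by positivity)

/-- Corollary: if `H` solves `H^{n-1}H''' = -1 + x` near the contact line with zero
contact angle and `H = κ x²(1 + o(1))` as `x ↘ 0`, then there is `C > 0` depending only
on `n` such that `H = κx²(1 + R₀)`, `H' = 2κx(1 + R₁)`, `H'' = 2κ(1 + R₂)` with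
`|R_i(x)| ≤ C (κ^{-n} x^{3-2n} + κ^{-n} x^{4-2n})` for all sufficiently small `x > 0`. -/
theorem contact_line_expansion_bounds (n : ℝ) (hn0 : 0 < n) (hn : n < 3 / 2) :
    ∃ C : ℝ, 0 < C ∧
      ∀ (H : ℝ → ℝ) (x₀ κ : ℝ), 0 < x₀ → 0 < κ →
        ContDiffOn ℝ 3 H (Set.Ioo 0 x₀) →
        (∀ x ∈ Set.Ioo (0:ℝ) x₀, 0 < H x) →
        (∀ x ∈ Set.Ioo (0:ℝ) x₀, H x ^ (n - 1) * deriv^[3] H x = -1 + x) →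
        H 0 = 0 →
        derivWithin H (Set.Ici 0) 0 = 0 →
        Filter.Tendsto (fun x : ℝ => H x / x ^ 2) (nhdsWithin 0 (Set.Ioi 0)) (nhds κ) →
        ∃ δ > 0, ∀ x ∈ Set.Ioo (0:ℝ) δ,
          |H x / (κ * x ^ 2) - 1|
              ≤ C * (κ ^ (-n) * x ^ (3 - 2*n) + κ ^ (-n) * x ^ (4 - 2*n)) ∧
          |deriv H x / (2 * κ * x) - 1|
              ≤ C * (κ ^ (-n) * x ^ (3 - 2*n) + κ ^ (-n) * x ^ (4 - 2*n)) ∧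
          |deriv (deriv H) x / (2 * κ) - 1|
              ≤ C * (κ ^ (-n) * x ^ (3 - 2*n) + κ ^ (-n) * x ^ (4 - 2*n)) :=
  contact_line_expansion_bounds_general n hn
end
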